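/- Let k, t1, t2 be integers with k > t1 > t2 ≥ 2, and let S = {π1, …, πn} be a (k; k−t1, k−t2)-SPID in a finite-dimensional vector space V over a field. Suppose that for some 2 ≤ m < r ≤ n the subspaces π1, …, πm form a (k−t1)-sunflower of maximal dimension with center V', and that V' is not contained in π_r. Then δ_r = k − dim(π_r ∩ ⟨π1, …, π_{r−1}⟩) ≤ t1 − m + 1. -/
import Mathlib


open Module

variable {F : Type*} [Field F] {V : Type*} [AddCommGroup V] [Module F V]
  [FiniteDimensional F V]

/-- The subspace `⟨π_1, …, π_j⟩` (1-based), i.e. the span of the `π i` with `(i : ℕ) < j`. -/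
def pspan {n : ℕ} (π : Fin n → Submodule F V) (j : ℕ) : Submodule F V :=
  ⨆ i : Fin n, ⨆ _ : (i : ℕ) < j, π i

/-- The 1-based difference sequence `δ_j = dim⟨π_1,…,π_j⟩ - dim⟨π_1,…,π_{j-1}⟩`. -/
noncomputable def delta {n : ℕ} (π : Fin n → Submodule F V) (j : ℕ) : ℕ :=
  finrank F ↥(pspan π j) - finrank F ↥(pspan π (j - 1))

/-- A `(k; ℓ_1, …, ℓ_v)`-SPID, where `L` is the set of prescribed intersection dimensions:
a family of pairwise distinct `k`-dimensional subspaces, any two distinct members meeting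
in a dimension belonging to `L`, and every value of `L` being attained. -/
def IsSPID {n : ℕ} (k : ℕ) (L : Set ℕ) (π : Fin n → Submodule F V) : Prop :=
  Function.Injective π ∧
  (∀ i, finrank F ↥(π i) = k) ∧
  (∀ i j, i ≠ j → finrank F ↥(π i ⊓ π j) ∈ L) ∧
  ∀ ℓ ∈ L, ∃ i j, i ≠ j ∧ finrank F ↥(π i ⊓ π j) = ℓ

/-- An `ℓ`-junta: all members pass through a common `ℓ`-dimensional subspace. -/
def IsJunta {n : ℕ} (ℓ : ℕ) (π : Fin n → Submodule F V) : Prop :=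
  ∃ C : Submodule F V, finrank F ↥C = ℓ ∧ ∀ i, C ≤ π i

/-- `S` contains an `ℓ`-sunflower of maximal dimension with `p` petals (all petals being
`k`-dimensional): `p` members of `S` pairwise meeting exactly in a common `ℓ`-dimensional
center and spanning a subspace of dimension `ℓ + p(k - ℓ)`. -/
def HasMaxSunflower (k ℓ p : ℕ) (S : Set (Submodule F V)) : Prop :=
  ∃ A : Finset (Submodule F V), ↑A ⊆ S ∧ A.card = p ∧
    ∃ C : Submodule F V, finrank F ↥C = ℓ ∧
      (∀ W ∈ A, ∀ W' ∈ A, W ≠ W' → W ⊓ W' = C) ∧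
      finrank F ↥(A.sup id) = ℓ + p * (k - ℓ)

lemma le_pspan {n : ℕ} (π : Fin n → Submodule F V) {i : Fin n} {j : ℕ}
    (h : (i : ℕ) < j) : π i ≤ pspan π j :=
  le_iSup_of_le i (le_iSup_of_le h le_rfl)

lemma pspan_mono {n : ℕ} (π : Fin n → Submodule F V) {j j' : ℕ} (h : j ≤ j') :
    pspan π j ≤ pspan π j' :=
  iSup_mono fun i => iSup_le fun hi => le_iSup_of_le (lt_of_lt_of_le hi h) le_rfl

lemma pspan_succ {n : ℕ} (π : Fin n → Submodule F V) {j : ℕ} (hj : j < n) :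
    pspan π (j + 1) = pspan π j ⊔ π ⟨j, hj⟩ := by
  apply le_antisymm
  · refine iSup_le fun i => iSup_le fun hi => ?_
    rcases Nat.lt_succ_iff_lt_or_eq.mp hi with h | h
    · exact le_sup_of_le_left (le_pspan π h)
    · have : i = ⟨j, hj⟩ := Fin.ext h
      rw [this]; exact le_sup_right
  · exact sup_le (pspan_mono π (Nat.le_succ j)) (le_pspan π (Nat.lt_succ_self j))

/-- If `π_1, …, π_m` (0-based indices `< m`) form a `(k-t₁)`-sunflower of maximal
dimension with center `V'` and `π_r` (with 0-based index `r ≥ m`) does not contain `V'`,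
then `δ_r = k - dim(π_r ∩ ⟨π_1,…,π_{r-1}⟩) ≤ t₁ - m + 1`. -/
theorem statement4 {n k t1 t2 m : ℕ} (h1 : 2 ≤ t2) (h2 : t2 < t1) (h3 : t1 < k)
    (π : Fin n → Submodule F V) (hS : IsSPID k {k - t1, k - t2} π)
    (hm : 2 ≤ m) (r : Fin n) (hr : m ≤ (r : ℕ))
    (V' : Submodule F V) (hV' : finrank F ↥V' = k - t1)
    (hcenter : ∀ i j : Fin n, (i : ℕ) < m → (j : ℕ) < m → i ≠ j → π i ⊓ π j = V')
    (hmax : finrank F ↥(pspan π m) = (k - t1) + m * t1)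
    (hnot : ¬ V' ≤ π r) :
    (k : ℤ) - finrank F ↥(π r ⊓ pspan π (r : ℕ)) ≤ (t1 : ℤ) - m + 1 := by
  obtain ⟨hinj, hdim, hint, -⟩ := hS
  have hmn : m < n := lt_of_le_of_lt hr r.isLt
  have ht1k : t1 ≤ k := le_of_lt h3
  -- every petal contains V'
  have hV'le : ∀ i : Fin n, (i : ℕ) < m → V' ≤ π i := by
    intro i hi
    by_cases h0 : (i : ℕ) = 0
    · have h1m : (1 : ℕ) < m := by omega
      have hc := hcenter i ⟨1, lt_trans h1m hmn⟩ hi h1m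
        (by intro he; rw [he] at h0; simp at h0)
      rw [← hc]; exact inf_le_left
    · have h0m : (0 : ℕ) < m := by omega
      have hc := hcenter i ⟨0, lt_trans h0m hmn⟩ hi h0m
        (by intro he; rw [he] at h0; simp at h0)
      rw [← hc]; exact inf_le_left
  -- π r meets V' in dimension < k - t1
  have hV'r : finrank F ↥(π r ⊓ V') < k - t1 := by
    have hlt : π r ⊓ V' < V' := by
      refine lt_of_le_of_ne inf_le_right fun he => hnot ?_
      rw [← he]; exact inf_le_left
    have := Submodule.finrank_lt_finrank_of_lt hlt
    omega
  -- lower bound on intersections with π r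
  have hlow : ∀ i : Fin n, (i : ℕ) < m → k - t1 ≤ finrank F ↥(π r ⊓ π i) := by
    intro i hi
    have hne : r ≠ i := by
      intro he; rw [he] at hr; omega
    have hmem := hint r i hne
    simp only [Set.mem_insert_iff, Set.mem_singleton_iff] at hmem
    rcases hmem with h | h <;> omega
  -- one-step dimension bound for the sunflower span
  have hstep : ∀ (j : ℕ), j < m → 1 ≤ j →
      finrank F ↥(pspan π (j + 1)) + (k - t1) ≤ finrank F ↥(pspan π j) + k := by
    intro j hj hj1
    have hjn : j < n := lt_trans hj hmn
    have heq := Submodule.finrank_sup_add_finrank_inf_eq (pspan π j) (π ⟨j, hjn⟩)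
    rw [← pspan_succ π hjn] at heq
    have hd : finrank F ↥(π ⟨j, hjn⟩) = k := hdim _
    have h0n : (0 : ℕ) < n := by omega
    have hVinf : V' ≤ pspan π j ⊓ π ⟨j, hjn⟩ :=
      le_inf (le_trans (hV'le ⟨0, h0n⟩ (show (0:ℕ) < m by omega)) (le_pspan π hj1)) (hV'le _ hj)
    have := Submodule.finrank_mono hVinf
    omega
  -- upper bound on dimensions of partial spans
  have hupper : ∀ j, j < m → finrank F ↥(pspan π (j + 1)) ≤ k + j * t1 := by
    intro j
    induction j with
    | zero =>
      intro h0
      have h0n : (0 : ℕ) < n := by omega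
      have hle : pspan π 1 ≤ π ⟨0, h0n⟩ := by
        refine iSup_le fun i => iSup_le fun hi => ?_
        have : i = ⟨0, h0n⟩ := Fin.ext (show (i : ℕ) = 0 by omega)
        rw [this]
      have := Submodule.finrank_mono hle
      have hd : finrank F ↥(π ⟨0, h0n⟩) = k := hdim _
      show finrank F ↥(pspan π 1) ≤ k + 0 * t1
      omega
    | succ j ih =>
      intro hj
      have hs := hstep (j + 1) hj (by omega)
      have hi := ih (by omega)
      have : (j + 1) * t1 = j * t1 + t1 := Nat.succ_mul _ _
      omega
  -- descending bound
  have hlower : ∀ d, d ≤ m - 1 →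
      finrank F ↥(pspan π m) ≤ finrank F ↥(pspan π (m - d)) + d * t1 := by
    intro d
    induction d with
    | zero => intro _; simp
    | succ d ih =>
      intro hd
      have h1 := ih (by omega)
      have h2 := hstep (m - d - 1) (by omega) (by omega)
      rw [show m - d - 1 + 1 = m - d by omega] at h2
      rw [show m - (d + 1) = m - d - 1 by omega, Nat.succ_mul]
      omega
  -- exact dimensions of partial spans
  have hfj : ∀ j, 1 ≤ j → j ≤ m →
      finrank F ↥(pspan π j) = k + (j - 1) * t1 := by
    intro j h1j hjm
    have hu : finrank F ↥(pspan π j) ≤ k + (j - 1) * t1 := by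
      have := hupper (j - 1) (by omega)
      rwa [show j - 1 + 1 = j by omega] at this
    have hl := hlower (m - j) (by omega)
    rw [show m - (m - j) = j by omega] at hl
    have e1 : (m - j) * t1 + j * t1 = m * t1 := by
      rw [← Nat.add_mul]; congr 1; omega
    have e2 : (j - 1) * t1 + t1 = j * t1 := by
      conv_rhs => rw [show j = j - 1 + 1 by omega]
      rw [Nat.succ_mul]
    omega
  -- each petal meets the previous span exactly in V'
  have hVeq : ∀ (j : ℕ) (hjn : j < n), 1 ≤ j → j < m →
      pspan π j ⊓ π ⟨j, hjn⟩ = V' := by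
    intro j hjn h1 hjm
    have heq := Submodule.finrank_sup_add_finrank_inf_eq (pspan π j) (π ⟨j, hjn⟩)
    rw [← pspan_succ π hjn] at heq
    have hfj1 := hfj j h1 (le_of_lt hjm)
    have hfj2 := hfj (j + 1) (by omega) hjm
    rw [show j + 1 - 1 = j by omega] at hfj2
    have hd : finrank F ↥(π ⟨j, hjn⟩) = k := hdim _
    have e2 : (j - 1) * t1 + t1 = j * t1 := by
      conv_rhs => rw [show j = j - 1 + 1 by omega]
      rw [Nat.succ_mul]
    have hrank : finrank F ↥(pspan π j ⊓ π ⟨j, hjn⟩) = k - t1 := by omega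
    have h0n : (0 : ℕ) < n := by omega
    have hVinf : V' ≤ pspan π j ⊓ π ⟨j, hjn⟩ :=
      le_inf (le_trans (hV'le ⟨0, h0n⟩ (show (0:ℕ) < m by omega)) (le_pspan π h1)) (hV'le _ hjm)
    exact (Submodule.eq_of_le_of_finrank_le hVinf (by rw [hrank, hV'])).symm
  -- main induction: dimension of π r ⊓ pspan grows
  have hB : ∀ j, j < m → k - t1 + j ≤ finrank F ↥(π r ⊓ pspan π (j + 1)) := by
    intro j
    induction j with
    | zero =>
      intro h0
      have h0n : (0 : ℕ) < n := by omega
      have hle : π r ⊓ π ⟨0, h0n⟩ ≤ π r ⊓ pspan π 1 :=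
        inf_le_inf_left _ (le_pspan π Nat.one_pos)
      have := Submodule.finrank_mono hle
      have := hlow ⟨0, h0n⟩ (show (0:ℕ) < m by omega)
      show k - t1 + 0 ≤ finrank F ↥(π r ⊓ pspan π 1)
      omega
    | succ j ih =>
      intro hjm
      have hjn' : j + 1 < n := lt_trans hjm hmn
      set W := π r ⊓ pspan π (j + 1) with hW
      set W' := π r ⊓ π ⟨j + 1, hjn'⟩ with hW'
      have hb1 : k - t1 + j ≤ finrank F ↥W := ih (by omega)
      have hb2 : k - t1 ≤ finrank F ↥W' := hlow _ hjm
      have h3 : W ⊓ W' ≤ π r ⊓ V' := by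
        have hsub : W ⊓ W' ≤ pspan π (j + 1) ⊓ π ⟨j + 1, hjn'⟩ :=
          inf_le_inf inf_le_right inf_le_right
        rw [hVeq (j + 1) hjn' (by omega) hjm] at hsub
        exact le_inf (le_trans inf_le_left inf_le_left) hsub
      have h4 : finrank F ↥(W ⊓ W') < k - t1 :=
        lt_of_le_of_lt (Submodule.finrank_mono h3) hV'r
      have h5 := Submodule.finrank_sup_add_finrank_inf_eq W W'
      have h6 : W ⊔ W' ≤ π r ⊓ pspan π (j + 1 + 1) :=
        sup_le (inf_le_inf le_rfl (pspan_mono π (by omega)))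
          (le_inf inf_le_left (le_trans inf_le_right (le_pspan π (Nat.lt_succ_self _))))
      have h7 := Submodule.finrank_mono h6
      omega
  have hBm := hB (m - 1) (by omega)
  rw [show m - 1 + 1 = m by omega] at hBm
  have hmono : finrank F ↥(π r ⊓ pspan π m) ≤ finrank F ↥(π r ⊓ pspan π (r : ℕ)) :=
    Submodule.finrank_mono (inf_le_inf_left _ (pspan_mono π hr))
  omega
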